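/- Let $A_1, \ldots, A_M$ be non-defective Schur stable matrices with $A_i = V_i D_i V_i^{-1}$, let $\rho_{\max} = \max_i \rho_i < 1$, and let $\mathcal{G}$ be a switching digraph with weights $\omega^+_{ij} = \ln\|V_j^{-1}V_i\|$. Define the maximum cycle mean $\mu(\mathcal{G}) = \max_C \omega^+(C)/|C|$ over all cycles. If $\tau > \mu(\mathcal{G})/(-\ln\rho_{\max})$, then for any $N_0 \ge 0$ and any switching signal respecting $\mathcal{G}$ whose number of switchings satisfies $N_\sigma(t) \le N_0 + t/\tau$ for all $t$, the solution of $x(t+1) = A_{\sigma(t)}x(t)$ satisfies $\|x(t)\| \le \bar{\bar{\gamma}} \, e^{(\mu(\mathcal{G})/\tau + \ln\rho_{\max}) t} \|x(0)\|$ for some constant $\bar{\bar{\gamma}}$ independent of $t$; in particular $x(t) \to 0$. -/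

import Mathlib

open scoped Matrix.Norms.L2Operator

/-- A cycle, represented by the list of its distinct vertices; every consecutive pair,
including the wrap-around pair, is a directed edge. -/
def IsCycleList {V : Type*} (E : V → V → Prop) (c : List V) : Prop :=
  c ≠ [] ∧ c.Nodup ∧ ∀ p ∈ c.zip (c.rotate 1), E p.1 p.2

/-- The weight of a cycle: the sum of its edge weights, including the wrap-around edge. -/
def cycleWeight {V : Type*} (ω : V → V → ℝ) (c : List V) : ℝ :=
  ((c.zip (c.rotate 1)).map fun p => ω p.1 p.2).sum

/-!
In the eigen-coordinates `V i⁻¹ x` of the active mode `i` every step contracts the state by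
`ρmax`, and a switch from `i` to `j` costs at most the factor `‖V j⁻¹ V i‖ = exp ω i j`. Hence
`‖x T‖ ≤ c · exp W · ρmax ^ T`, where `W` is the `ω`-weight of the walk of visited modes in the
switching graph. Cutting simple cycles out of that walk, each of mean weight at most `μ`, leaves
a path with at most `M` edges, so `W ≤ B + μ K` after `K` switches; the dwell-time bound
`K ≤ N₀ + T / τ` turns this into the rate `μ / τ + log ρmax < 0`. The step `μ K ≤ μ (N₀ + T / τ)`
needs `μ ≥ 0`, which holds because `ω` satisfies the triangle inequality and `ω i i ≥ 0`.
-/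

open Finset

section Walks

open Fin.NatCast

variable {V : Type*}

def walkWeight (ω : V → V → ℝ) (f : ℕ → V) (n : ℕ) : ℝ :=
  ∑ k ∈ range n, ω (f k) (f (k + 1))

@[simp]
lemma walkWeight_zero (ω : V → V → ℝ) (f : ℕ → V) : walkWeight ω f 0 = 0 := rfl

lemma walkWeight_succ (ω : V → V → ℝ) (f : ℕ → V) (n : ℕ) :
    walkWeight ω f (n + 1) = walkWeight ω f n + ω (f n) (f (n + 1)) :=
  sum_range_succ _ n

lemma walkWeight_congr {ω : V → V → ℝ} {f g : ℕ → V} {n : ℕ} (h : ∀ k ≤ n, f k = g k) :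
    walkWeight ω f n = walkWeight ω g n :=
  sum_congr rfl fun k hk => by
    have := mem_range.mp hk
    rw [h k (by omega), h (k + 1) (by omega)]

lemma walkWeight_sub_const (ω : V → V → ℝ) (c : ℝ) (f : ℕ → V) (n : ℕ) :
    walkWeight (fun a b => ω a b - c) f n = walkWeight ω f n - n * c := by
  simp [walkWeight, sum_sub_distrib]

lemma zip_rotate_one_ofFn {n : ℕ} [NeZero n] (g : Fin n → V) :
    (List.ofFn g).zip ((List.ofFn g).rotate 1) = List.ofFn fun i => (g i, g (i + 1)) := by
  refine List.ext_getElem (by simp) fun k h₁ h₂ => ?_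
  simp only [List.getElem_zip, List.getElem_rotate, List.getElem_ofFn, List.length_ofFn]
  congr 3
  simp

lemma cycleWeight_ofFn (ω : V → V → ℝ) {n : ℕ} [NeZero n] (g : Fin n → V) :
    cycleWeight ω (List.ofFn g) = walkWeight ω (fun k => g (k : Fin n)) n := by
  rw [cycleWeight, zip_rotate_one_ofFn, List.map_ofFn, List.sum_ofFn, walkWeight,
    ← Fin.sum_univ_eq_sum_range]
  simp

lemma le_walkWeight_of_triangle {ω : V → V → ℝ} (htri : ∀ a b c, ω a c ≤ ω a b + ω b c)
    (f : ℕ → V) {n : ℕ} (hn : 0 < n) : ω (f 0) (f n) ≤ walkWeight ω f n := by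
  induction n, hn using Nat.le_induction with
  | base => simp [walkWeight]
  | succ n _ ih => linarith [htri (f 0) (f n) (f (n + 1)), walkWeight_succ ω f n]

lemma cycleWeight_nonneg_of_triangle {ω : V → V → ℝ} (htri : ∀ a b c, ω a c ≤ ω a b + ω b c)
    (hdiag : ∀ a, 0 ≤ ω a a) {C : List V} (hC : C ≠ []) : 0 ≤ cycleWeight ω C := by
  have : NeZero C.length := ⟨by simpa using hC⟩
  rw [← List.ofFn_get C, cycleWeight_ofFn]
  have := le_walkWeight_of_triangle htri (fun k => C.get (k : Fin C.length))
    (Nat.pos_of_neZero C.length)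
  simp only [Fin.natCast_self, Nat.cast_zero] at this
  exact (hdiag _).trans this

lemma cycleWeight_sub_const (ω : V → V → ℝ) (c : ℝ) (C : List V) :
    cycleWeight (fun a b => ω a b - c) C = cycleWeight ω C - C.length * c := by
  rcases eq_or_ne C [] with rfl | hC
  · simp [cycleWeight]
  have : NeZero C.length := ⟨by simpa using hC⟩
  rw [← List.ofFn_get C, cycleWeight_ofFn, cycleWeight_ofFn, walkWeight_sub_const, List.length_ofFn]

section ClosedWalk

variable {E : V → V → Prop} {f : ℕ → V} {n : ℕ} [NeZero n]

lemma apply_mod_of_closed (hclosed : f n = f 0) {k : ℕ} (hk : k ≤ n) : f (k % n) = f k := by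
  rcases hk.lt_or_eq with hk | rfl
  · rw [Nat.mod_eq_of_lt hk]
  · rw [Nat.mod_self, hclosed]

lemma isCycleList_ofFn_of_closed (hf : ∀ k, E (f k) (f (k + 1))) (hclosed : f n = f 0)
    (hinj : Set.InjOn f (Set.Iio n)) : IsCycleList E (List.ofFn fun i : Fin n => f i) := by
  refine ⟨by simp [NeZero.ne n], List.nodup_ofFn.mpr fun i j hij => Fin.ext (hinj i.2 j.2 hij),
    fun p hp => ?_⟩
  rw [zip_rotate_one_ofFn] at hp
  obtain ⟨i, rfl⟩ := List.mem_ofFn.mp hp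
  have hval : ((i + 1 : Fin n) : ℕ) = (i + 1) % n := by simp [Fin.val_add, Nat.add_mod]
  simpa [hval, apply_mod_of_closed hclosed (Nat.succ_le_of_lt i.2)] using hf i

lemma cycleWeight_ofFn_of_closed (ω : V → V → ℝ) (hclosed : f n = f 0) :
    cycleWeight ω (List.ofFn fun i : Fin n => f i) = walkWeight ω f n := by
  rw [cycleWeight_ofFn]
  exact walkWeight_congr fun k hk => by simp [apply_mod_of_closed hclosed hk]

end ClosedWalk

def spliceOut (f : ℕ → V) (i d : ℕ) : ℕ → V := fun k => if k ≤ i then f k else f (k + d)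

section Splice

variable {E : V → V → Prop} {f : ℕ → V} {i d k : ℕ}

lemma spliceOut_of_le (h : k ≤ i) : spliceOut f i d k = f k := if_pos h

lemma spliceOut_of_ge (hloop : f (i + d) = f i) (h : i ≤ k) : spliceOut f i d k = f (k + d) := by
  rcases h.lt_or_eq with h | rfl
  · exact if_neg (by omega)
  · exact (if_pos le_rfl).trans hloop.symm

lemma spliceOut_isWalk (hf : ∀ k, E (f k) (f (k + 1))) (hloop : f (i + d) = f i) (k : ℕ) :
    E (spliceOut f i d k) (spliceOut f i d (k + 1)) := by
  rcases lt_or_ge k i with h | h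
  · rw [spliceOut_of_le h.le, spliceOut_of_le h]
    exact hf k
  · rw [spliceOut_of_ge hloop h, spliceOut_of_ge hloop (by omega), Nat.add_right_comm]
    exact hf (k + d)

lemma walkWeight_spliceOut (ω : V → V → ℝ) (hloop : f (i + d) = f i) (r : ℕ) :
    walkWeight ω f (i + d + r) =
      walkWeight ω (spliceOut f i d) (i + r) + walkWeight ω (fun k => f (i + k)) d := by
  have hpre : walkWeight ω (spliceOut f i d) i = walkWeight ω f i :=
    walkWeight_congr fun k hk => spliceOut_of_le hk
  have hpost : ∑ k ∈ range r, ω (spliceOut f i d (i + k)) (spliceOut f i d (i + k + 1)) =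
      ∑ k ∈ range r, ω (f (i + d + k)) (f (i + d + k + 1)) :=
    sum_congr rfl fun k _ => by
      rw [spliceOut_of_ge hloop (by omega), spliceOut_of_ge hloop (by omega)]
      congr 2 <;> omega
  simp only [walkWeight, sum_range_add] at hpre hpost ⊢
  simp only [add_assoc] at hpost ⊢
  linarith

end Splice

lemma exists_simple_loop [Fintype V] (f : ℕ → V) :
    ∃ i d, 0 < d ∧ i + d ≤ Fintype.card V ∧ f (i + d) = f i ∧
      Set.InjOn (fun k => f (i + k)) (Set.Iio d) := by
  classical
  obtain ⟨j₀, hj₀, hrep₀⟩ : ∃ j ≤ Fintype.card V, ∃ i < j, f i = f j := by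
    obtain ⟨a, b, hab, heq⟩ := Fintype.exists_ne_map_eq_of_card_lt
      (fun k : Fin (Fintype.card V + 1) => f k) (by simp)
    rcases (Fin.val_injective.ne hab).lt_or_gt with h | h
    exacts [⟨b, by omega, a, h, heq⟩, ⟨a, by omega, b, h, heq.symm⟩]
  have hrep : ∃ j, ∃ i < j, f i = f j := ⟨j₀, hrep₀⟩
  have hle := Nat.find_min' hrep hrep₀
  obtain ⟨i, hij, heq⟩ := Nat.find_spec hrep
  refine ⟨i, Nat.find hrep - i, by omega, by omega, by rw [Nat.add_sub_cancel' hij.le, heq], ?_⟩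
  -- a repetition inside the loop would be an earlier repetition in the walk
  intro a (ha : a < _) b (hb : b < _) hab
  by_contra hne
  rcases lt_or_gt_of_ne hne with h | h
  · exact Nat.find_min hrep (show i + b < Nat.find hrep by omega) ⟨i + a, by omega, hab⟩
  · exact Nat.find_min hrep (show i + a < Nat.find hrep by omega) ⟨i + b, by omega, hab.symm⟩

theorem walkWeight_le_of_cycleWeight_nonpos [Fintype V] {E : V → V → Prop} {ω : V → V → ℝ}
    (hcyc : ∀ C, IsCycleList E C → cycleWeight ω C ≤ 0) {B : ℝ} (hB0 : 0 ≤ B)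
    (hB : ∀ a b, ω a b ≤ B) {f : ℕ → V} (hf : ∀ k, E (f k) (f (k + 1))) (n : ℕ) :
    walkWeight ω f n ≤ Fintype.card V * B := by
  induction n using Nat.strong_induction_on generalizing f with
  | _ n ih =>
    rcases le_or_gt n (Fintype.card V) with hn | hn
    · calc walkWeight ω f n ≤ ∑ _k ∈ range n, B := sum_le_sum fun k _ => hB _ _
        _ ≤ Fintype.card V * B := by
          simpa using mul_le_mul_of_nonneg_right (Nat.cast_le.mpr hn) hB0
    obtain ⟨i, d, hd, hid, hloop, hinj⟩ := exists_simple_loop f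
    have : NeZero d := ⟨hd.ne'⟩
    obtain ⟨r, rfl⟩ : ∃ r, n = i + d + r := ⟨n - (i + d), by omega⟩
    have hcycle : walkWeight ω (fun k => f (i + k)) d ≤ 0 := by
      rw [← cycleWeight_ofFn_of_closed ω (by simpa using hloop)]
      exact hcyc _ (isCycleList_ofFn_of_closed (fun k => hf (i + k)) (by simpa using hloop) hinj)
    rw [walkWeight_spliceOut ω hloop]
    linarith [ih (i + r) (by omega) (spliceOut_isWalk hf hloop)]

theorem exists_walkWeight_le_of_cycleMean_le [Fintype V] {E : V → V → Prop}
    {ω : V → V → ℝ} {μ : ℝ} (hμ : ∀ C, IsCycleList E C → cycleWeight ω C / C.length ≤ μ) :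
    ∃ B, ∀ f : ℕ → V, (∀ k, E (f k) (f (k + 1))) → ∀ n, walkWeight ω f n ≤ B + μ * n := by
  set ω' : V → V → ℝ := fun a b => ω a b - μ
  have hcyc : ∀ C, IsCycleList E C → cycleWeight ω' C ≤ 0 := fun C hC => by
    have hlen : (0 : ℝ) < C.length := by exact_mod_cast List.length_pos_iff.mpr hC.1
    have hmean := (div_le_iff₀ hlen).mp (hμ C hC)
    rw [cycleWeight_sub_const]
    linarith
  set S := ∑ p : V × V, |ω' p.1 p.2|
  have hS : ∀ a b, ω' a b ≤ S := fun a b => (le_abs_self _).trans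
    (single_le_sum (f := fun p : V × V => |ω' p.1 p.2|) (fun _ _ => abs_nonneg _) (mem_univ (a, b)))
  refine ⟨Fintype.card V * S, fun f hf n => ?_⟩
  have := walkWeight_le_of_cycleWeight_nonpos hcyc (sum_nonneg fun _ _ => abs_nonneg _) hS hf n
  rw [walkWeight_sub_const] at this
  linarith

lemma cycleMean_nonneg_of_triangle {E : V → V → Prop} {ω : V → V → ℝ}
    (htri : ∀ a b c, ω a c ≤ ω a b + ω b c) (hdiag : ∀ a, 0 ≤ ω a a) {μ : ℝ}
    (hμ : ∃ C, IsCycleList E C ∧ μ = cycleWeight ω C / (C.length : ℝ)) : 0 ≤ μ := by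
  obtain ⟨C, hC, rfl⟩ := hμ
  exact div_nonneg (cycleWeight_nonneg_of_triangle htri hdiag hC.1) (Nat.cast_nonneg _)

end Walks

lemma le_mul_pow_of_le_mul {g : ℕ → ℝ} {ρ c : ℝ} (hρ : 0 ≤ ρ) {a b T : ℕ} (ha : g a ≤ c * ρ ^ a)
    (hstep : ∀ u, a ≤ u → u < b → g (u + 1) ≤ ρ * g u) (haT : a ≤ T) (hTb : T ≤ b) :
    g T ≤ c * ρ ^ T := by
  induction T, haT using Nat.le_induction with
  | base => exact ha
  | succ T hT ih =>
    calc g (T + 1) ≤ ρ * g T := hstep T hT (by omega)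
      _ ≤ ρ * (c * ρ ^ T) := mul_le_mul_of_nonneg_left (ih (by omega)) hρ
      _ = c * ρ ^ (T + 1) := by ring

theorem le_exp_walkWeight_mul_pow {ι : Type*} (W : ι → ℕ → ℝ) (ω : ι → ι → ℝ) {ρ : ℝ}
    (hρ : 0 ≤ ρ) (s : ℕ → ι) {t : ℕ → ℕ} (ht0 : t 0 = 0) (ht : Monotone t)
    (hstep : ∀ k u, t k ≤ u → u < t (k + 1) → W (s (k + 1)) (u + 1) ≤ ρ * W (s (k + 1)) u)
    (hswitch : ∀ i j u, W j u ≤ Real.exp (ω i j) * W i u) (K : ℕ) {T : ℕ} (hK : t K ≤ T)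
    (hT : T ≤ t (K + 1)) :
    W (s (K + 1)) T ≤ Real.exp (walkWeight ω (fun k => s (k + 1)) K) * W (s 1) 0 * ρ ^ T := by
  induction K generalizing T with
  | zero => exact le_mul_pow_of_le_mul hρ (by simp [ht0]) (hstep 0) hK hT
  | succ K ih =>
    refine le_mul_pow_of_le_mul hρ ?_ (hstep (K + 1)) hK hT
    calc W (s (K + 2)) (t (K + 1))
        ≤ Real.exp (ω (s (K + 1)) (s (K + 2))) * W (s (K + 1)) (t (K + 1)) := hswitch _ _ _
      _ ≤ Real.exp (ω (s (K + 1)) (s (K + 2))) *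
          (Real.exp (walkWeight ω (fun k => s (k + 1)) K) * W (s 1) 0 * ρ ^ t (K + 1)) :=
        mul_le_mul_of_nonneg_left (ih (ht K.le_succ) le_rfl) (Real.exp_nonneg _)
      _ = _ := by rw [walkWeight_succ, Real.exp_add]; ring

lemma log_norm_mul_le {R : Type*} [NormedRing R] {a b : R} (hab : a * b ≠ 0) :
    Real.log ‖a * b‖ ≤ Real.log ‖a‖ + Real.log ‖b‖ := by
  rw [← Real.log_mul (norm_ne_zero_iff.mpr (left_ne_zero_of_mul hab))
    (norm_ne_zero_iff.mpr (right_ne_zero_of_mul hab))]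
  exact Real.log_le_log (norm_pos_iff.mpr hab) (norm_mul_le a b)

section Modal

open Matrix

variable {𝕜 n : Type*} [RCLike 𝕜] [Fintype n] [DecidableEq n]

lemma norm_le_of_isDiag {D : Matrix n n 𝕜} (hD : D.IsDiag) {ρ : ℝ} (hρ : 0 ≤ ρ)
    (h : ∀ j, ‖D j j‖ ≤ ρ) : ‖D‖ ≤ ρ := by
  rw [← hD.diagonal_diag, l2_opNorm_diagonal]
  exact (pi_norm_le_iff_of_nonneg hρ).mpr h

lemma norm_toEuclideanCLM_le (P : Matrix n n 𝕜) (v : EuclideanSpace 𝕜 n) :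
    ‖toEuclideanCLM (n := n) (𝕜 := 𝕜) P v‖ ≤ ‖P‖ * ‖v‖ :=
  (toEuclideanCLM (n := n) (𝕜 := 𝕜) P).le_opNorm v

lemma toEuclideanCLM_mul_apply (P Q : Matrix n n 𝕜) (v : EuclideanSpace 𝕜 n) :
    toEuclideanCLM (n := n) (𝕜 := 𝕜) P (toEuclideanCLM (n := n) (𝕜 := 𝕜) Q v) =
      toEuclideanCLM (n := n) (𝕜 := 𝕜) (P * Q) v := by
  rw [map_mul]
  rfl

variable {V : Matrix n n 𝕜}

lemma norm_le_mul_norm_toEuclideanCLM_inv (hV : IsUnit V) (v : EuclideanSpace 𝕜 n) :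
    ‖v‖ ≤ ‖V‖ * ‖toEuclideanCLM (n := n) (𝕜 := 𝕜) V⁻¹ v‖ := by
  calc ‖v‖ = ‖toEuclideanCLM (n := n) (𝕜 := 𝕜) V (toEuclideanCLM (n := n) (𝕜 := 𝕜) V⁻¹ v)‖ := by
        rw [toEuclideanCLM_mul_apply, mul_nonsing_inv _ ((isUnit_iff_isUnit_det V).mp hV),
          map_one, one_apply_eq_self]
    _ ≤ _ := norm_toEuclideanCLM_le _ _

lemma norm_toEuclideanCLM_inv_conj_le (hV : IsUnit V) (D : Matrix n n 𝕜)
    (v : EuclideanSpace 𝕜 n) :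
    ‖toEuclideanCLM (n := n) (𝕜 := 𝕜) V⁻¹ (toEuclideanCLM (n := n) (𝕜 := 𝕜) (V * D * V⁻¹) v)‖ ≤
      ‖D‖ * ‖toEuclideanCLM (n := n) (𝕜 := 𝕜) V⁻¹ v‖ := by
  have hV' : V⁻¹ * V = 1 := nonsing_inv_mul _ ((isUnit_iff_isUnit_det V).mp hV)
  rw [toEuclideanCLM_mul_apply, ← mul_assoc, ← mul_assoc, hV', one_mul,
    ← toEuclideanCLM_mul_apply]
  exact norm_toEuclideanCLM_le _ _

lemma norm_toEuclideanCLM_inv_le_mul (W : Matrix n n 𝕜) (hV : IsUnit V)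
    (v : EuclideanSpace 𝕜 n) :
    ‖toEuclideanCLM (n := n) (𝕜 := 𝕜) W⁻¹ v‖ ≤
      ‖W⁻¹ * V‖ * ‖toEuclideanCLM (n := n) (𝕜 := 𝕜) V⁻¹ v‖ := by
  calc ‖toEuclideanCLM (n := n) (𝕜 := 𝕜) W⁻¹ v‖ =
        ‖toEuclideanCLM (n := n) (𝕜 := 𝕜) (W⁻¹ * V) (toEuclideanCLM (n := n) (𝕜 := 𝕜) V⁻¹ v)‖ := by
        rw [toEuclideanCLM_mul_apply, mul_assoc,
          mul_nonsing_inv _ ((isUnit_iff_isUnit_det V).mp hV), mul_one]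
    _ ≤ _ := norm_toEuclideanCLM_le _ _

variable {A B C : Matrix n n 𝕜}

lemma log_norm_inv_mul_le_add (hA : IsUnit A) (hB : IsUnit B) (hC : IsUnit C) :
    Real.log ‖C⁻¹ * A‖ ≤ Real.log ‖B⁻¹ * A‖ + Real.log ‖C⁻¹ * B‖ := by
  rcases subsingleton_or_nontrivial (Matrix n n 𝕜) with _ | _
  · simp [Subsingleton.elim _ (0 : Matrix n n 𝕜)]
  have hfac : C⁻¹ * A = (C⁻¹ * B) * (B⁻¹ * A) := by
    rw [mul_assoc, ← mul_assoc B, mul_nonsing_inv _ ((isUnit_iff_isUnit_det B).mp hB), one_mul]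
  have hne : C⁻¹ * A ≠ 0 := ((isUnit_nonsing_inv_iff.mpr hC).mul hA).ne_zero
  rw [hfac] at hne ⊢
  linarith [log_norm_mul_le hne]

lemma log_norm_inv_mul_self_nonneg (hA : IsUnit A) : 0 ≤ Real.log ‖A⁻¹ * A‖ := by
  rw [nonsing_inv_mul _ ((isUnit_iff_isUnit_det A).mp hA)]
  rcases subsingleton_or_nontrivial (Matrix n n 𝕜) with _ | _
  · simp [Subsingleton.elim _ (0 : Matrix n n 𝕜)]
  · exact Real.log_nonneg (one_le_norm_one _)

theorem norm_switched_trajectory_le {ι : Type*} (V D : ι → Matrix n n 𝕜) (hV : ∀ i, IsUnit (V i))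
    {ρ : ℝ} (hρ : 0 ≤ ρ) (hD : ∀ i, ‖D i‖ ≤ ρ) (s : ℕ → ι) {t : ℕ → ℕ} (ht0 : t 0 = 0)
    (ht : Monotone t) {σ : ℕ → ι} (hσ : ∀ k u, t k ≤ u → u < t (k + 1) → σ u = s (k + 1))
    {z : ℕ → EuclideanSpace 𝕜 n}
    (hz : ∀ u, z (u + 1) = toEuclideanCLM (n := n) (𝕜 := 𝕜) (V (σ u) * D (σ u) * (V (σ u))⁻¹) (z u))
    {K T : ℕ} (hK : t K ≤ T) (hT : T ≤ t (K + 1)) :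
    ‖z T‖ ≤ ‖V (s (K + 1))‖ * ‖(V (s 1))⁻¹‖ *
      Real.exp (walkWeight (fun i j => Real.log ‖(V j)⁻¹ * V i‖) (fun k => s (k + 1)) K) *
      ρ ^ T * ‖z 0‖ := by
  -- `w i u` is the state at time `u` in the eigenbasis of mode `i`
  set w : ι → ℕ → EuclideanSpace 𝕜 n := fun i u => toEuclideanCLM (n := n) (𝕜 := 𝕜) (V i)⁻¹ (z u)
  have hstep : ∀ k u, t k ≤ u → u < t (k + 1) →
      ‖w (s (k + 1)) (u + 1)‖ ≤ ρ * ‖w (s (k + 1)) u‖ := fun k u hku huk => by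
    simp only [w, hz u, ← hσ k u hku huk]
    exact (norm_toEuclideanCLM_inv_conj_le (hV _) _ _).trans
      (mul_le_mul_of_nonneg_right (hD _) (norm_nonneg _))
  have hswitch : ∀ i j u, ‖w j u‖ ≤ Real.exp (Real.log ‖(V j)⁻¹ * V i‖) * ‖w i u‖ :=
    fun i j u => (norm_toEuclideanCLM_inv_le_mul _ (hV i) _).trans
      (mul_le_mul_of_nonneg_right (Real.le_exp_log _) (norm_nonneg _))
  have hw := le_exp_walkWeight_mul_pow (fun i u => ‖w i u‖) _ hρ s ht0 ht hstep hswitch K hK hT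
  calc ‖z T‖ ≤ ‖V (s (K + 1))‖ * ‖w (s (K + 1)) T‖ := norm_le_mul_norm_toEuclideanCLM_inv (hV _) _
    _ ≤ ‖V (s (K + 1))‖ * (Real.exp (walkWeight (fun i j => Real.log ‖(V j)⁻¹ * V i‖)
          (fun k => s (k + 1)) K) * (‖(V (s 1))⁻¹‖ * ‖z 0‖) * ρ ^ T) := by
        gcongr
        exact hw.trans (by gcongr; exact norm_toEuclideanCLM_le _ _)
    _ = _ := by ring

end Modal

def ofRealEuclidean {n : Type*} (v : EuclideanSpace ℝ n) : EuclideanSpace ℂ n :=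
  WithLp.toLp 2 fun j => (v j : ℂ)

lemma norm_ofRealEuclidean {n : Type*} [Fintype n] (v : EuclideanSpace ℝ n) :
    ‖ofRealEuclidean v‖ = ‖v‖ := by
  simp [ofRealEuclidean, EuclideanSpace.norm_eq]

lemma toEuclideanCLM_map_ofReal {n : Type*} [Fintype n] [DecidableEq n] {A : Matrix n n ℝ}
    {v w : EuclideanSpace ℝ n} (h : w = A.mulVec v) :
    Matrix.toEuclideanCLM (n := n) (𝕜 := ℂ) (A.map Complex.ofReal) (ofRealEuclidean v) =
      ofRealEuclidean w := by
  ext j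
  simp only [ofRealEuclidean, h, Matrix.toEuclideanCLM_toLp, PiLp.toLp_apply]
  exact (RingHom.map_mulVec Complex.ofRealHom _ _ j).symm

theorem exists_norm_le_exp_walkWeight_mul_pow {n ι : Type*} [Fintype n] [DecidableEq n]
    [Finite ι] (A : ι → Matrix n n ℝ) (V D : ι → Matrix n n ℂ) (hV : ∀ i, IsUnit (V i))
    (hD : ∀ i, (D i).IsDiag) (hdecomp : ∀ i, (A i).map Complex.ofReal = V i * D i * (V i)⁻¹)
    {ρ : ℝ} (hρ : 0 ≤ ρ) (hρD : ∀ i j, ‖D i j j‖ ≤ ρ) (s : ℕ → ι) {t : ℕ → ℕ} (ht0 : t 0 = 0)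
    (ht : Monotone t) {σ : ℕ → ι} (hσ : ∀ k u, t k ≤ u → u < t (k + 1) → σ u = s (k + 1))
    {x : ℕ → EuclideanSpace ℝ n} (hx : ∀ u, x (u + 1) = (A (σ u)).mulVec (x u)) :
    ∃ c ≥ 0, ∀ K T, t K ≤ T → T ≤ t (K + 1) → ‖x T‖ ≤
      c * Real.exp (walkWeight (fun i j => Real.log ‖(V j)⁻¹ * V i‖) (fun k => s (k + 1)) K) *
        ρ ^ T * ‖x 0‖ := by
  obtain ⟨c, hc⟩ := (Set.finite_range fun p : ι × ι => ‖V p.1‖ * ‖(V p.2)⁻¹‖).bddAbove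
  refine ⟨c, (mul_nonneg (norm_nonneg _) (norm_nonneg _)).trans (hc ⟨(s 0, s 0), rfl⟩),
    fun K T hK hT => ?_⟩
  have hz := norm_switched_trajectory_le V D hV hρ (fun i => norm_le_of_isDiag (hD i) hρ (hρD i))
    s ht0 ht hσ (z := fun u => ofRealEuclidean (x u))
    (fun u => by rw [← hdecomp]; exact (toEuclideanCLM_map_ofReal (hx u)).symm) hK hT
  simp only [norm_ofRealEuclidean] at hz
  refine hz.trans ?_
  gcongr
  exact hc ⟨(s (K + 1), s 1), rfl⟩

lemma exists_le_lt_succ_of_strictMono {t : ℕ → ℕ} (ht : StrictMono t) (ht0 : t 0 = 0) (T : ℕ) :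
    ∃ K, t K ≤ T ∧ T < t (K + 1) := by
  have h : ∃ k, T < t k := ⟨T + 1, Nat.lt_of_lt_of_le T.lt_succ_self (ht.id_le _)⟩
  obtain ⟨K, hK⟩ : ∃ K, Nat.find h = K + 1 := Nat.exists_eq_succ_of_ne_zero fun h0 => by
    simpa [h0, ht0] using Nat.find_spec h
  exact ⟨K, not_lt.mp (Nat.find_min h (by omega : K < Nat.find h)), hK ▸ Nat.find_spec h⟩

lemma tendsto_zero_of_norm_le_exp {E : Type*} [NormedAddCommGroup E] {x : ℕ → E} {γ c : ℝ}
    (hc : c < 0) (h : ∀ T : ℕ, ‖x T‖ ≤ γ * Real.exp (c * T) * ‖x 0‖) :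
    Filter.Tendsto x Filter.atTop (nhds 0) := by
  rw [tendsto_zero_iff_norm_tendsto_zero]
  refine squeeze_zero (fun _ => norm_nonneg _) h ?_
  have : Filter.Tendsto (fun T : ℕ => Real.exp (c * T)) Filter.atTop (nhds 0) :=
    Real.tendsto_exp_atBot.comp
      ((Filter.tendsto_const_mul_atBot_of_neg hc).mpr tendsto_natCast_atTop_atTop)
  simpa using (this.const_mul γ).mul_const ‖x 0‖

lemma div_add_log_neg {μ τ ρ : ℝ} (hρ0 : 0 < ρ) (hρ1 : ρ < 1) (hτ0 : 0 < τ)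
    (hτ : μ / -Real.log ρ < τ) : μ / τ + Real.log ρ < 0 := by
  have hlog := Real.log_neg hρ0 hρ1
  rw [div_lt_iff₀ (neg_pos.mpr hlog)] at hτ
  have := (div_lt_iff₀ hτ0).mpr (by linarith : μ < -Real.log ρ * τ)
  linarith

theorem average_dwell_time_stability_nondefective_general
    {N M : ℕ} (A : Fin M → Matrix (Fin N) (Fin N) ℝ)
    (V D : Fin M → Matrix (Fin N) (Fin N) ℂ) (ρmax : ℝ)
    (hVunit : ∀ i, IsUnit (V i))
    (hDdiag : ∀ i, (D i).IsDiag)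
    (hdecomp : ∀ i, (A i).map Complex.ofReal = V i * D i * (V i)⁻¹)
    (hρmax : ∀ i j, ‖D i j j‖ ≤ ρmax)
    (hρpos : 0 < ρmax) (hSchur : ρmax < 1)
    (E : Fin M → Fin M → Prop)
    (μ τ N₀ : ℝ)
    (hμ : IsGreatest {r : ℝ | ∃ C, IsCycleList E C ∧
            r = cycleWeight (fun i j => Real.log ‖(V j)⁻¹ * V i‖) C / (C.length : ℝ)} μ)
    (hτpos : 0 < τ) (hτ : μ / (-Real.log ρmax) < τ)
    (s : ℕ → Fin M) (t : ℕ → ℕ)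
    (ht0 : t 0 = 0) (htmono : StrictMono t)
    (have_dwell : ∀ k T : ℕ, t k ≤ T → (k : ℝ) ≤ N₀ + (T : ℝ) / τ)
    (hrespect : ∀ k, E (s (k + 1)) (s (k + 2)))
    (σ : ℕ → Fin M)
    (hσ : ∀ k u, t k ≤ u → u < t (k + 1) → σ u = s (k + 1))
    (x : ℕ → EuclideanSpace ℝ (Fin N))
    (hx : ∀ u, x (u + 1) = (A (σ u)).mulVec (x u)) :
    (∃ γ : ℝ, ∀ T : ℕ,
        ‖x T‖ ≤ γ * Real.exp ((μ / τ + Real.log ρmax) * T) * ‖x 0‖) ∧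
    Filter.Tendsto x Filter.atTop (nhds 0) := by
  set ω : Fin M → Fin M → ℝ := fun i j => Real.log ‖(V j)⁻¹ * V i‖
  have hμ0 : 0 ≤ μ := cycleMean_nonneg_of_triangle (ω := ω)
    (fun a b c => log_norm_inv_mul_le_add (hVunit a) (hVunit b) (hVunit c))
    (fun a => log_norm_inv_mul_self_nonneg (hVunit a)) hμ.1
  obtain ⟨B, hB⟩ := exists_walkWeight_le_of_cycleMean_le fun C hC => hμ.2 ⟨C, hC, rfl⟩
  obtain ⟨c, hc0, hc⟩ := exists_norm_le_exp_walkWeight_mul_pow A V D hVunit hDdiag hdecomp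
    hρpos.le hρmax s ht0 htmono.monotone hσ hx
  have hbound : ∀ T : ℕ, ‖x T‖ ≤
      c * Real.exp (B + μ * N₀) * Real.exp ((μ / τ + Real.log ρmax) * T) * ‖x 0‖ := by
    intro T
    obtain ⟨K, hK, hKT⟩ := exists_le_lt_succ_of_strictMono htmono ht0 T
    have hW : walkWeight ω (fun k => s (k + 1)) K ≤ B + μ * (N₀ + T / τ) :=
      (hB _ hrespect K).trans (by gcongr; exact have_dwell K T hK)
    have hexp : Real.exp (B + μ * (N₀ + T / τ)) * ρmax ^ T =
        Real.exp (B + μ * N₀) * Real.exp ((μ / τ + Real.log ρmax) * T) := by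
      have hpow : ρmax ^ T = Real.exp (T * Real.log ρmax) := by
        rw [Real.exp_nat_mul, Real.exp_log hρpos]
      rw [hpow, ← Real.exp_add, ← Real.exp_add]
      ring_nf
    calc ‖x T‖ ≤ c * Real.exp (B + μ * (N₀ + T / τ)) * ρmax ^ T * ‖x 0‖ :=
          (hc K T hK hKT.le).trans (by gcongr)
      _ = _ := by linear_combination c * ‖x 0‖ * hexp
  exact ⟨⟨_, hbound⟩,
    tendsto_zero_of_norm_le_exp (div_add_log_neg hρpos hSchur hτpos hτ) hbound⟩

/-- Graph-based average dwell time theorem (non-defective case).  With maximum cycle mean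
`μ(𝒢)` of the switching graph with weights `ω⁺ᵢⱼ = ln ‖Vⱼ⁻¹Vᵢ‖`, if
`τ > μ(𝒢)/(-ln ρ_max)` and the switching signal respects `𝒢` and satisfies the average
dwell time condition `N_σ(T) ≤ N₀ + T/τ`, then
`‖x T‖ ≤ γ̄̄ e^{(μ(𝒢)/τ + ln ρ_max) T} ‖x 0‖` for a constant `γ̄̄` independent of `T`;
in particular `x T → 0`. -/
theorem average_dwell_time_stability_nondefective
    {N M : ℕ} (A : Fin M → Matrix (Fin N) (Fin N) ℝ)
    (V D : Fin M → Matrix (Fin N) (Fin N) ℂ) (ρmax : ℝ)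
    (hVunit : ∀ i, IsUnit (V i))
    (hDdiag : ∀ i, (D i).IsDiag)
    (hdecomp : ∀ i, (A i).map Complex.ofReal = V i * D i * (V i)⁻¹)
    (hρmax : ∀ i j, ‖D i j j‖ ≤ ρmax)
    (hρpos : 0 < ρmax) (hSchur : ρmax < 1)
    (E : Fin M → Fin M → Prop)
    (μ τ N₀ : ℝ)
    (hμ : IsGreatest {r : ℝ | ∃ C, IsCycleList E C ∧
            r = cycleWeight (fun i j => Real.log ‖(V j)⁻¹ * V i‖) C / (C.length : ℝ)} μ)
    (hτpos : 0 < τ) (hτ : μ / (-Real.log ρmax) < τ)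
    (hN₀ : 0 ≤ N₀)
    (s : ℕ → Fin M) (t : ℕ → ℕ)
    (ht0 : t 0 = 0) (htmono : StrictMono t)
    (have_dwell : ∀ k T : ℕ, t k ≤ T → (k : ℝ) ≤ N₀ + (T : ℝ) / τ)
    (hrespect : ∀ k, E (s (k + 1)) (s (k + 2)))
    (σ : ℕ → Fin M)
    (hσ : ∀ k u, t k ≤ u → u < t (k + 1) → σ u = s (k + 1))
    (x : ℕ → EuclideanSpace ℝ (Fin N))
    (hx : ∀ u, x (u + 1) = (A (σ u)).mulVec (x u)) :
    (∃ γ : ℝ, ∀ T : ℕ,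
        ‖x T‖ ≤ γ * Real.exp ((μ / τ + Real.log ρmax) * T) * ‖x 0‖) ∧
    Filter.Tendsto x Filter.atTop (nhds 0) :=
  average_dwell_time_stability_nondefective_general A V D ρmax hVunit hDdiag hdecomp hρmax hρpos
    hSchur E μ τ N₀ hμ hτpos hτ s t ht0 htmono have_dwell hrespect σ hσ x hx
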